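/- For every positive integer n and integer r ≥ 0, the normalization factor a_r := n^{-1} ∑_{t=1}^n |1 - e^{2πit/n}|^{2r} equals the central binomial coefficient C(2r, r), provided n > 2r. -/

import Mathlib

/-!
On the unit circle `|1 - w|² = (1 - w)(1 - w⁻¹) = -w⁻¹(1 - w)²`, so `|1 - w|^{2r}` is the Laurent
polynomial `∑ₖ (-1)^{r+k} C(2r,k) w^{k-r}`. Summed over the `n`-th roots of unity, `w^{k-r}`
contributes `n` if `n ∣ k - r` and `0` otherwise; as `|k - r| ≤ r < n`, only `k = r` survives.
-/

open Complex Finset ComplexConjugate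

theorem IsPrimitiveRoot.sum_Icc_zpow_pow_eq_ite_dvd {K : Type*} [Field K] {ζ : K} {n : ℕ}
    (hζ : IsPrimitiveRoot ζ n) (m : ℤ) :
    ∑ t ∈ Icc 1 n, (ζ ^ m) ^ t = if (n : ℤ) ∣ m then (n : K) else 0 := by
  split_ifs with hm
  · simp [(hζ.zpow_eq_one_iff_dvd m).2 hm]
  · have hne : ζ ^ m ≠ 1 := mt (hζ.zpow_eq_one_iff_dvd m).1 hm
    have hpow : (ζ ^ m) ^ n = 1 := by
      rw [← zpow_natCast, ← zpow_mul, mul_comm, zpow_mul, zpow_natCast, hζ.pow_eq_one, one_zpow]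
    rw [← Ico_add_one_right_eq_Icc, sum_Ico_eq_sum_range, add_tsub_cancel_right]
    simp_rw [pow_add, pow_one, ← mul_sum, geom_sum_eq hne, hpow, sub_self, zero_div, mul_zero]

theorem one_sub_mul_one_sub_inv_pow_eq_sum {K : Type*} [Field K] {w : K} (hw : w ≠ 0) (r : ℕ) :
    ((1 - w) * (1 - w⁻¹)) ^ r =
      ∑ k ∈ range (2 * r + 1),
        (-1 : K) ^ (r + k) * (Nat.choose (2 * r) k : K) * w ^ ((k : ℤ) - r) := by
  have hsq : (1 - w) * (1 - w⁻¹) = -w⁻¹ * (-w + 1) ^ 2 := by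
    field_simp
    ring
  rw [hsq, mul_pow, ← pow_mul, add_pow, mul_sum]
  refine sum_congr rfl fun k _ => ?_
  rw [zpow_sub₀ hw, zpow_natCast, zpow_natCast, neg_pow w, neg_pow w⁻¹, inv_pow, one_pow, mul_one]
  ring

theorem IsPrimitiveRoot.sum_Icc_one_sub_mul_one_sub_inv_pow {K : Type*} [Field K] {ζ : K}
    {n r : ℕ} (hζ : IsPrimitiveRoot ζ n) (hnr : 2 * r < n) :
    ∑ t ∈ Icc 1 n, ((1 - ζ ^ t) * (1 - (ζ ^ t)⁻¹)) ^ r = Nat.choose (2 * r) r * n := by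
  have hζ0 : ζ ≠ 0 := hζ.ne_zero (by omega)
  have hdvd_iff : ∀ k ∈ range (2 * r + 1), (n : ℤ) ∣ (k : ℤ) - r ↔ k = r := by
    intro k hk
    rw [mem_range] at hk
    constructor
    · intro h
      have := Int.eq_zero_of_abs_lt_dvd h (abs_lt.mpr ⟨by omega, by omega⟩)
      omega
    · rintro rfl
      simp
  calc ∑ t ∈ Icc 1 n, ((1 - ζ ^ t) * (1 - (ζ ^ t)⁻¹)) ^ r
      = ∑ k ∈ range (2 * r + 1), (-1 : K) ^ (r + k) * (Nat.choose (2 * r) k : K) *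
          ∑ t ∈ Icc 1 n, (ζ ^ ((k : ℤ) - r)) ^ t := by
        simp_rw [one_sub_mul_one_sub_inv_pow_eq_sum (pow_ne_zero _ hζ0), mul_sum]
        rw [sum_comm]
        refine sum_congr rfl fun k _ => sum_congr rfl fun t _ => ?_
        rw [← zpow_natCast (ζ ^ _), ← zpow_natCast ζ t, ← zpow_mul, ← zpow_mul, mul_comm (t : ℤ)]
    _ = ∑ k ∈ range (2 * r + 1), (-1 : K) ^ (r + k) * (Nat.choose (2 * r) k : K) *
          if k = r then (n : K) else 0 := by
        refine sum_congr rfl fun k hk => ?_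
        rw [hζ.sum_Icc_zpow_pow_eq_ite_dvd, if_congr (hdvd_iff k hk) rfl rfl]
    _ = Nat.choose (2 * r) r * n := by
        rw [sum_eq_single_of_mem r (by simp; omega) fun k _ hk => by simp [hk]]
        simp [← two_mul, pow_mul]

theorem norm_one_sub_pow_two_mul_eq {w : ℂ} (hw : ‖w‖ = 1) (r : ℕ) :
    ((‖1 - w‖ ^ (2 * r) : ℝ) : ℂ) = ((1 - w) * (1 - w⁻¹)) ^ r := by
  rw [inv_eq_conj hw, ← map_one conj, ← map_sub conj, map_one, mul_conj', ← pow_mul, ofReal_pow]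

theorem taper_normalization_eq_centralBinom_general (n r : ℕ) (hnr : 2 * r < n) :
    (n : ℝ)⁻¹ * ∑ t ∈ Finset.Icc 1 n,
        ‖1 - Complex.exp (2 * Real.pi * Complex.I * t / n)‖ ^ (2 * r)
      = (Nat.choose (2 * r) r : ℝ) := by
  have hn : n ≠ 0 := by omega
  set ζ := exp (2 * Real.pi * I / n)
  have hζ : IsPrimitiveRoot ζ n := isPrimitiveRoot_exp n hn
  have hexp (t : ℕ) : exp (2 * Real.pi * I * t / n) = ζ ^ t := by
    rw [← exp_nat_mul]
    ring_nf
  have hnorm (t : ℕ) : ‖ζ ^ t‖ = 1 := by rw [norm_pow, hζ.norm'_eq_one hn, one_pow]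
  rw [inv_mul_eq_iff_eq_mul₀ (by positivity), ← ofReal_inj, ofReal_sum, ofReal_mul]
  simp only [hexp, norm_one_sub_pow_two_mul_eq (hnorm _), ofReal_natCast]
  rw [hζ.sum_Icc_one_sub_mul_one_sub_inv_pow hnr, mul_comm]

/-- For every positive integer `n` and integer `r ≥ 0` with `n > 2r`, the normalization
factor `a_r = n⁻¹ ∑_{t=1}^n |1 - e^{2πit/n}|^{2r}` equals the central binomial
coefficient `C(2r, r)`. -/
theorem taper_normalization_eq_centralBinom (n r : ℕ) (hn : 0 < n) (hnr : 2 * r < n) :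
    (n : ℝ)⁻¹ * ∑ t ∈ Finset.Icc 1 n,
        ‖1 - Complex.exp (2 * Real.pi * Complex.I * t / n)‖ ^ (2 * r)
      = (Nat.choose (2 * r) r : ℝ) :=
  taper_normalization_eq_centralBinom_general n r hnr
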